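/- With the Taylor-substitution setup: let T > 0, let f ∈ ℝ[X, Y_1, …, Y_t], let trans_1, …, trans_t : ℝ → ℝ be regularly expandable on (0,T] with thresholds n_1, …, n_t, set n* = max(n_1, …, n_t), and let F(x) = f(x, trans_1(x), …, trans_t(x)). Then F(x) < 0 for all x ∈ (0,T] if and only if there exists n ≥ n* such that the polynomial Tmax(n,F) satisfies Tmax(n,F)(x) < 0 for all x ∈ (0,T]. -/

import Mathlib

/-- `taylorPoly a m n` is the polynomial `Σ_{i=1}^{n} (-1)^{i-1} aᵢ X^{mᵢ}`,
the sum of the first `n` terms of the alternating series with coefficients `a`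
and exponents `m` (indexed from `1`). -/
noncomputable def taylorPoly (a : ℕ → ℝ) (m : ℕ → ℕ) (n : ℕ) : Polynomial ℝ :=
  ∑ i ∈ Finset.range n, Polynomial.C ((-1 : ℝ) ^ i * a (i + 1)) * Polynomial.X ^ (m (i + 1))

/-- `g : ℝ → ℝ` is regularly expandable on `(0, T]` with threshold `n0`, witnessed by
coefficients `a i ∈ (0,1]` and strictly increasing exponents `m` (indexed from `1`):
the alternating series `Σ (-1)^{i-1} aᵢ x^{mᵢ}` converges to `g x` on `[0,T]`,
`g > 0` on `(0,T]`, and for `n ≥ n0` and `x ∈ (0,T]` the partial sum `taylor(g,n)(x)`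
is positive and `aₙ x^{mₙ} > a_{n+1} x^{m_{n+1}} > 0`. -/
structure RegExpand (g : ℝ → ℝ) (T : ℝ) (n0 : ℕ) where
  a : ℕ → ℝ
  m : ℕ → ℕ
  a_pos : ∀ i, 1 ≤ i → 0 < a i
  a_le_one : ∀ i, 1 ≤ i → a i ≤ 1
  m_mono : ∀ i, 1 ≤ i → m i < m (i + 1)
  converges : ∀ x ∈ Set.Icc (0 : ℝ) T,
    Filter.Tendsto (fun N => (taylorPoly a m N).eval x) Filter.atTop (nhds (g x))
  g_pos : ∀ x ∈ Set.Ioc (0 : ℝ) T, 0 < g x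
  taylor_pos : ∀ n, n0 ≤ n → ∀ x ∈ Set.Ioc (0 : ℝ) T, 0 < (taylorPoly a m n).eval x
  terms_dec : ∀ n, n0 ≤ n → ∀ x ∈ Set.Ioc (0 : ℝ) T,
    a (n + 1) * x ^ m (n + 1) < a n * x ^ m n ∧ 0 < a (n + 1) * x ^ m (n + 1)

/-- `Tmin fplus fminus a m n` is the lower limit polynomial
`Tmin(n,F) = f⁺(X, taylor(trans₁,2n), …) + f⁻(X, taylor(trans₁,2n-1), …)`. -/
noncomputable def Tmin {t : ℕ} (fplus fminus : MvPolynomial (Option (Fin t)) ℝ)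
    (a : Fin t → ℕ → ℝ) (m : Fin t → ℕ → ℕ) (n : ℕ) : Polynomial ℝ :=
  MvPolynomial.aeval
      (fun o => Option.elim o Polynomial.X (fun k => taylorPoly (a k) (m k) (2 * n))) fplus +
    MvPolynomial.aeval
      (fun o => Option.elim o Polynomial.X (fun k => taylorPoly (a k) (m k) (2 * n - 1))) fminus

/-- `Tmax fplus fminus a m n` is the upper limit polynomial
`Tmax(n,F) = f⁺(X, taylor(trans₁,2n-1), …) + f⁻(X, taylor(trans₁,2n), …)`. -/
noncomputable def Tmax {t : ℕ} (fplus fminus : MvPolynomial (Option (Fin t)) ℝ)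
    (a : Fin t → ℕ → ℝ) (m : Fin t → ℕ → ℕ) (n : ℕ) : Polynomial ℝ :=
  MvPolynomial.aeval
      (fun o => Option.elim o Polynomial.X (fun k => taylorPoly (a k) (m k) (2 * n - 1))) fplus +
    MvPolynomial.aeval
      (fun o => Option.elim o Polynomial.X (fun k => taylorPoly (a k) (m k) (2 * n))) fminus

open Polynomial Filter


lemma evalAeval {σ : Type*} (v : σ → Polynomial ℝ) (p : MvPolynomial σ ℝ) (x : ℝ) :
    (MvPolynomial.aeval v p).eval x = MvPolynomial.eval (fun i => (v i).eval x) p := by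
  induction p using MvPolynomial.induction_on with
  | C a => simp [MvPolynomial.algebraMap_eq]
  | add p q hp hq => simp [hp, hq]
  | mul_X p i hp => simp [hp]

lemma evalMono {σ : Type*} (p : MvPolynomial σ ℝ) (hp : ∀ d, 0 ≤ p.coeff d)
    (v w : σ → ℝ) (h0 : ∀ i, 0 ≤ v i) (hvw : ∀ i, v i ≤ w i) :
    MvPolynomial.eval v p ≤ MvPolynomial.eval w p := by
  rw [MvPolynomial.eval_eq, MvPolynomial.eval_eq]
  apply Finset.sum_le_sum
  intro d _
  apply mul_le_mul_of_nonneg_left _ (hp d)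
  apply Finset.prod_le_prod
  · intro i _; exact pow_nonneg (h0 i) _
  · intro i _; exact pow_le_pow_left₀ (h0 i) (hvw i) _

def Dom (P Q : Polynomial ℝ) : Prop := ∀ i, |P.coeff i| ≤ Q.coeff i

lemma Dom.zero : Dom 0 0 := fun i => by simp

lemma Dom.add {P P' Q Q' : Polynomial ℝ} (h : Dom P Q) (h' : Dom P' Q') : Dom (P + P') (Q + Q') := by
  intro i; simp only [Polynomial.coeff_add]
  exact (abs_add_le _ _).trans (add_le_add (h i) (h' i))

lemma Dom.sum {α : Type*} (s : Finset α) (f g : α → Polynomial ℝ) (h : ∀ a ∈ s, Dom (f a) (g a)) :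
    Dom (∑ a ∈ s, f a) (∑ a ∈ s, g a) := by
  classical
  induction s using Finset.induction with
  | empty => simpa using Dom.zero
  | @insert x s hx ih =>
      rw [Finset.sum_insert hx, Finset.sum_insert hx]
      exact (h _ (Finset.mem_insert_self _ _)).add (ih fun a ha => h a (Finset.mem_insert_of_mem ha))

lemma Dom.mul {P P' Q Q' : Polynomial ℝ} (h : Dom P Q) (h' : Dom P' Q') : Dom (P * P') (Q * Q') := by
  intro k
  rw [Polynomial.coeff_mul, Polynomial.coeff_mul]
  refine (Finset.abs_sum_le_sum_abs _ _).trans (Finset.sum_le_sum ?_)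
  intro ij _
  rw [abs_mul]
  exact mul_le_mul (h _) (h' _) (abs_nonneg _) ((abs_nonneg _).trans (h _))

lemma Dom.one : Dom 1 1 := by
  intro i
  simp only [Polynomial.coeff_one]
  split_ifs <;> simp

lemma Dom.pow {P Q : Polynomial ℝ} (h : Dom P Q) (k : ℕ) : Dom (P ^ k) (Q ^ k) := by
  induction k with
  | zero => simpa using Dom.one
  | succ k ih => rw [pow_succ, pow_succ]; exact ih.mul h

lemma Dom.C {c b : ℝ} (hcb : |c| ≤ b) : Dom (Polynomial.C c) (Polynomial.C b) := by
  intro i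
  simp only [Polynomial.coeff_C]
  split_ifs <;> simp [hcb]

lemma Dom.X : Dom (Polynomial.X : Polynomial ℝ) Polynomial.X := by
  intro i
  simp only [Polynomial.coeff_X]
  split_ifs <;> simp

lemma Dom.eval_le {P Q : Polynomial ℝ} (h : Dom P Q) (μ : ℕ) (hvan : ∀ i < μ, P.coeff i = 0)
    {x : ℝ} (hx0 : 0 ≤ x) (hx1 : x ≤ 1) : |P.eval x| ≤ Q.eval 1 * x ^ μ := by
  have hQ : ∀ i, 0 ≤ Q.coeff i := fun i => (abs_nonneg _).trans (h i)
  set N := max P.natDegree Q.natDegree + 1 with hN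
  rw [Polynomial.eval_eq_sum_range' (n := N) (lt_of_le_of_lt (le_max_left _ _) (Nat.lt_succ_self _))]
  rw [Polynomial.eval_eq_sum_range' (n := N) (lt_of_le_of_lt (le_max_right _ _) (Nat.lt_succ_self _))]
  rw [Finset.sum_mul]
  refine (Finset.abs_sum_le_sum_abs _ _).trans (Finset.sum_le_sum ?_)
  intro i _
  by_cases hi : i < μ
  · rw [hvan i hi]
    have : (0:ℝ) ≤ Q.coeff i * 1 ^ i * x ^ μ :=
      mul_nonneg (mul_nonneg (hQ i) (by positivity)) (pow_nonneg hx0 _)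
    simpa using this
  · push_neg at hi
    rw [abs_mul]
    have h1 : |x ^ i| ≤ x ^ μ := by
      rw [abs_pow, abs_of_nonneg hx0]
      exact pow_le_pow_of_le_one hx0 hx1 hi
    calc |P.coeff i| * |x ^ i| ≤ Q.coeff i * x ^ μ :=
          mul_le_mul (h i) h1 (abs_nonneg _) (hQ i)
      _ = Q.coeff i * 1 ^ i * x ^ μ := by ring


lemma taylorPoly_succ (a : ℕ → ℝ) (m : ℕ → ℕ) (N : ℕ) :
    taylorPoly a m (N + 1) =
      taylorPoly a m N + Polynomial.C ((-1 : ℝ) ^ N * a (N + 1)) * Polynomial.X ^ (m (N + 1)) :=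
  Finset.sum_range_succ _ _

lemma taylorPoly_eval_succ (a : ℕ → ℝ) (m : ℕ → ℕ) (N : ℕ) (x : ℝ) :
    (taylorPoly a m (N + 1)).eval x =
      (taylorPoly a m N).eval x + (-1 : ℝ) ^ N * (a (N + 1) * x ^ (m (N + 1))) := by
  rw [taylorPoly_succ]
  simp [mul_assoc]

lemma taylor_sub_dvd (a : ℕ → ℝ) (m : ℕ → ℕ) (hm : ∀ i j, 1 ≤ i → i ≤ j → m i ≤ m j)
    {N N' : ℕ} (hNN : N ≤ N') :
    (Polynomial.X : Polynomial ℝ) ^ (m (N + 1)) ∣ (taylorPoly a m N' - taylorPoly a m N) := by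
  unfold taylorPoly
  rw [← Finset.sum_Ico_eq_sub _ hNN]
  apply Finset.dvd_sum
  intro i hi
  apply Dvd.dvd.mul_left
  apply pow_dvd_pow
  exact hm (N + 1) (i + 1) (by omega) (by have := (Finset.mem_Ico.1 hi).1; omega)

lemma aeval_sub_dvd {σ : Type*} (p : MvPolynomial σ ℝ) (v w : σ → Polynomial ℝ) (μ : ℕ)
    (h : ∀ i, (Polynomial.X ^ μ : Polynomial ℝ) ∣ (v i - w i)) :
    (Polynomial.X ^ μ : Polynomial ℝ) ∣ (MvPolynomial.aeval v p - MvPolynomial.aeval w p) := by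
  induction p using MvPolynomial.induction_on with
  | C a => simp
  | add p q hp hq =>
      simp only [map_add]
      have heq : MvPolynomial.aeval v p + MvPolynomial.aeval v q -
          (MvPolynomial.aeval w p + MvPolynomial.aeval w q) =
          (MvPolynomial.aeval v p - MvPolynomial.aeval w p) +
          (MvPolynomial.aeval v q - MvPolynomial.aeval w q) := by ring
      rw [heq]; exact dvd_add hp hq
  | mul_X p i hp =>
      simp only [map_mul, MvPolynomial.aeval_X]
      have heq : MvPolynomial.aeval v p * v i - MvPolynomial.aeval w p * w i =
          MvPolynomial.aeval v p * (v i - w i) +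
          (MvPolynomial.aeval v p - MvPolynomial.aeval w p) * w i := by ring
      rw [heq]
      exact dvd_add ((h i).mul_left _) (hp.mul_right _)

section PartialSums

variable (a : ℕ → ℝ) (m : ℕ → ℕ) (x : ℝ) (n0 : ℕ)
variable (hdec : ∀ n, n0 ≤ n →
  a (n + 1) * x ^ m (n + 1) < a n * x ^ m n ∧ 0 < a (n + 1) * x ^ m (n + 1))

include hdec

lemma even_le : ∀ j N, n0 ≤ N → Even N →
    (taylorPoly a m N).eval x ≤ (taylorPoly a m (N + j)).eval x := by
  intro j
  induction j using Nat.strong_induction_on with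
  | _ j ih =>
    match j with
    | 0 => intro N _ _; simp
    | 1 =>
      intro N hN hE
      rw [taylorPoly_eval_succ, hE.neg_one_pow]
      have := (hdec N hN).2
      nlinarith
    | (j + 2) =>
      intro N hN hE
      have h1 : (taylorPoly a m N).eval x ≤ (taylorPoly a m (N + 2)).eval x := by
        rw [show N + 2 = N + 1 + 1 from rfl, taylorPoly_eval_succ, taylorPoly_eval_succ,
          hE.neg_one_pow]
        have hodd : Odd (N + 1) := hE.add_one
        rw [hodd.neg_one_pow]
        have h2 := (hdec (N + 1) (by omega)).1
        nlinarith
      have h3 := ih j (by omega) (N + 2) (by omega) (by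
        rcases hE with ⟨r, hr⟩; exact ⟨r + 1, by omega⟩)
      calc (taylorPoly a m N).eval x ≤ (taylorPoly a m (N + 2)).eval x := h1
        _ ≤ (taylorPoly a m (N + 2 + j)).eval x := h3
        _ = (taylorPoly a m (N + (j + 2))).eval x := by rw [show N + 2 + j = N + (j + 2) from by omega]

lemma odd_ge : ∀ j N, n0 ≤ N → Odd N →
    (taylorPoly a m (N + j)).eval x ≤ (taylorPoly a m N).eval x := by
  intro j
  induction j using Nat.strong_induction_on with
  | _ j ih =>
    match j with
    | 0 => intro N _ _; simp
    | 1 =>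
      intro N hN hO
      rw [taylorPoly_eval_succ, hO.neg_one_pow]
      have := (hdec N hN).2
      nlinarith
    | (j + 2) =>
      intro N hN hO
      have h1 : (taylorPoly a m (N + 2)).eval x ≤ (taylorPoly a m N).eval x := by
        rw [show N + 2 = N + 1 + 1 from rfl, taylorPoly_eval_succ, taylorPoly_eval_succ,
          hO.neg_one_pow]
        have heven : Even (N + 1) := hO.add_one
        rw [heven.neg_one_pow]
        have h2 := (hdec (N + 1) (by omega)).1
        nlinarith
      have h3 := ih j (by omega) (N + 2) (by omega) (by
        rcases hO with ⟨r, hr⟩; exact ⟨r + 1, by omega⟩)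
      calc (taylorPoly a m (N + (j + 2))).eval x
          = (taylorPoly a m (N + 2 + j)).eval x := by rw [show N + 2 + j = N + (j + 2) from by omega]
        _ ≤ (taylorPoly a m (N + 2)).eval x := h3
        _ ≤ (taylorPoly a m N).eval x := h1

end PartialSums

lemma sign_near_zero {P : Polynomial ℝ} {r : ℕ}
    (hd : (Polynomial.X : Polynomial ℝ) ^ r ∣ P) :
    ∃ δ > 0, ∀ x : ℝ, 0 < x → x < δ →
      ((P.coeff r < 0 → P.eval x < 0) ∧ (0 < P.coeff r → 0 < P.eval x)) := by
  obtain ⟨Q, rfl⟩ := hd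
  have hc0 : (Polynomial.X ^ r * Q).coeff r = Q.eval 0 := by
    have := Polynomial.coeff_X_pow_mul Q r 0
    simp only [zero_add] at this
    rw [this, ← Polynomial.coeff_zero_eq_eval_zero]
  by_cases hc : Q.eval 0 = 0
  · refine ⟨1, one_pos, fun x _ _ => ?_⟩
    rw [hc0, hc]
    constructor <;> intro h <;> linarith
  · have hcont : ContinuousAt (fun y => Q.eval y * Q.eval 0) 0 :=
      ((Polynomial.continuous Q).mul continuous_const).continuousAt
    have hpos : (0:ℝ) < Q.eval 0 * Q.eval 0 := mul_self_pos.2 hc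
    have hev : ∀ᶠ y in nhds (0:ℝ), 0 < Q.eval y * Q.eval 0 := by
      have := hcont.eventually (isOpen_Ioi.eventually_mem
        (show ((fun y => Q.eval y * Q.eval 0) 0) ∈ Set.Ioi (0:ℝ) by simpa using hpos))
      simpa [Set.mem_Ioi] using this
    obtain ⟨δ, hδ, hball⟩ := Metric.eventually_nhds_iff.1 hev
    refine ⟨δ, hδ, fun x hx1 hx2 => ?_⟩
    have hx : dist x (0:ℝ) < δ := by
      rw [Real.dist_eq, sub_zero, abs_of_pos hx1]; exact hx2
    have hQx := hball hx
    have hxr : 0 < x ^ r := pow_pos hx1 r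
    have heval : (Polynomial.X ^ r * Q).eval x = x ^ r * Q.eval x := by simp
    rw [hc0, heval]
    constructor <;> intro h <;> nlinarith

lemma Dom.prod {α : Type*} (s : Finset α) (f g : α → Polynomial ℝ) (h : ∀ a ∈ s, Dom (f a) (g a)) :
    Dom (∏ a ∈ s, f a) (∏ a ∈ s, g a) := by
  classical
  induction s using Finset.induction with
  | empty => simpa using Dom.one
  | @insert x s hx ih =>
      rw [Finset.prod_insert hx, Finset.prod_insert hx]
      exact (h _ (Finset.mem_insert_self _ _)).mul (ih fun a ha => h a (Finset.mem_insert_of_mem ha))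

lemma Dom.monomial {c : ℝ} (hc : |c| ≤ 1) (e : ℕ) :
    Dom (Polynomial.C c * Polynomial.X ^ e) (Polynomial.X ^ e) := by
  have := (Dom.C hc).mul (Dom.X.pow e)
  rwa [map_one, one_mul] at this

lemma m_mono_le (m : ℕ → ℕ) (h : ∀ i, 1 ≤ i → m i < m (i + 1)) :
    ∀ i j, 1 ≤ i → i ≤ j → m i ≤ m j := by
  intro i j h1 hij
  induction j, hij using Nat.le_induction with
  | base => exact le_refl _
  | succ j hij ih => exact ih.trans (le_of_lt (h j (by omega)))

lemma m_growth (m : ℕ → ℕ) (h : ∀ i, 1 ≤ i → m i < m (i + 1)) :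
    ∀ i, 1 ≤ i → i - 1 ≤ m i := by
  intro i
  induction i with
  | zero => omega
  | succ i ih =>
      intro _
      rcases Nat.eq_zero_or_pos i with h0 | h0
      · omega
      · have h1 := h i h0
        have h2 := ih h0
        omega

noncomputable def taylorDom (m : ℕ → ℕ) (N : ℕ) : Polynomial ℝ :=
  ∑ i ∈ Finset.range N, Polynomial.X ^ (m (i + 1))

lemma dom_taylor (a : ℕ → ℝ) (m : ℕ → ℕ) (N : ℕ)
    (ha_pos : ∀ i, 1 ≤ i → 0 < a i) (ha1 : ∀ i, 1 ≤ i → a i ≤ 1) :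
    Dom (taylorPoly a m N) (taylorDom m N) := by
  apply Dom.sum
  intro i _
  apply Dom.monomial
  rw [abs_mul, abs_pow, abs_neg, abs_one, one_pow, one_mul,
    abs_of_pos (ha_pos (i + 1) (by omega))]
  exact ha1 (i + 1) (by omega)

lemma taylorDom_eval_one (m : ℕ → ℕ) (N : ℕ) : (taylorDom m N).eval 1 = N := by
  rw [taylorDom, Polynomial.eval_finset_sum]
  simp

lemma taylorDom_eval_one_nonneg (m : ℕ → ℕ) (N : ℕ) : 0 ≤ (taylorDom m N).eval 1 := by
  rw [taylorDom_eval_one]; positivity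

lemma dom_aeval {σ : Type*} (p : MvPolynomial σ ℝ) (env envD : σ → Polynomial ℝ)
    (hD : ∀ i, Dom (env i) (envD i)) :
    Dom (MvPolynomial.aeval env p)
      (∑ d ∈ p.support, Polynomial.C |p.coeff d| * ∏ i ∈ d.support, (envD i) ^ (d i)) := by
  classical
  conv_lhs => rw [MvPolynomial.as_sum p]
  rw [map_sum]
  apply Dom.sum
  intro d _
  rw [MvPolynomial.aeval_monomial]
  have halg : (algebraMap ℝ (Polynomial ℝ)) (MvPolynomial.coeff d p) =
      Polynomial.C (MvPolynomial.coeff d p) := rfl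
  rw [halg]
  have hprod : (d.prod fun i k => env i ^ k) = ∏ i ∈ d.support, (env i) ^ (d i) := rfl
  rw [hprod]
  exact (Dom.C (le_refl _)).mul (Dom.prod _ _ _ fun i _ => (hD i).pow _)

lemma dominator_eval_one_le {σ : Type*} (p : MvPolynomial σ ℝ) (envD : σ → Polynomial ℝ)
    (B : ℝ) (hB1 : 1 ≤ B) (hnn : ∀ i, 0 ≤ (envD i).eval 1) (hB : ∀ i, (envD i).eval 1 ≤ B) :
    (∑ d ∈ p.support, Polynomial.C |p.coeff d| * ∏ i ∈ d.support, (envD i) ^ (d i)).eval 1 ≤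
      (∑ d ∈ p.support, |p.coeff d|) * B ^ p.totalDegree := by
  classical
  rw [Polynomial.eval_finset_sum, Finset.sum_mul]
  apply Finset.sum_le_sum
  intro d hd
  rw [Polynomial.eval_mul, Polynomial.eval_C, Polynomial.eval_prod]
  apply mul_le_mul_of_nonneg_left _ (abs_nonneg _)
  calc (∏ i ∈ d.support, ((envD i) ^ (d i)).eval 1)
      ≤ ∏ i ∈ d.support, B ^ (d i) := by
        apply Finset.prod_le_prod
        · intro i _; rw [Polynomial.eval_pow]; exact pow_nonneg (hnn i) _
        · intro i _; rw [Polynomial.eval_pow]; exact pow_le_pow_left₀ (hnn i) (hB i) _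
    _ = B ^ (∑ i ∈ d.support, d i) := Finset.prod_pow_eq_pow_sum _ _ _
    _ ≤ B ^ p.totalDegree := by
        apply pow_le_pow_right₀ hB1
        exact MvPolynomial.le_totalDegree hd

lemma RegExpand.one_le {g : ℝ → ℝ} {T : ℝ} {n0 : ℕ} (hT : 0 < T) (R : RegExpand g T n0) :
    1 ≤ n0 := by
  by_contra h
  have h0 : n0 ≤ 0 := by omega
  have := R.taylor_pos 0 h0 T ⟨hT, le_refl T⟩
  simp [taylorPoly] at this

lemma RegExpand.even_le_g {g : ℝ → ℝ} {T : ℝ} {n0 : ℕ} (R : RegExpand g T n0)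
    {x : ℝ} (hx : x ∈ Set.Ioc (0:ℝ) T) {N : ℕ} (hN : n0 ≤ N) (hE : Even N) :
    (taylorPoly R.a R.m N).eval x ≤ g x := by
  refine ge_of_tendsto (R.converges x ⟨hx.1.le, hx.2⟩)
    (Filter.eventually_atTop.2 ⟨N, fun M hM => ?_⟩)
  have := even_le R.a R.m x n0 (fun n hn => R.terms_dec n hn x hx) (M - N) N hN hE
  rwa [Nat.add_sub_cancel' hM] at this

lemma RegExpand.g_le_odd {g : ℝ → ℝ} {T : ℝ} {n0 : ℕ} (R : RegExpand g T n0)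
    {x : ℝ} (hx : x ∈ Set.Ioc (0:ℝ) T) {N : ℕ} (hN : n0 ≤ N) (hO : Odd N) :
    g x ≤ (taylorPoly R.a R.m N).eval x := by
  refine le_of_tendsto (R.converges x ⟨hx.1.le, hx.2⟩)
    (Filter.eventually_atTop.2 ⟨N, fun M hM => ?_⟩)
  have := odd_ge R.a R.m x n0 (fun n hn => R.terms_dec n hn x hx) (M - N) N hN hO
  rwa [Nat.add_sub_cancel' hM] at this

lemma tendsto_aux1 : Filter.Tendsto (fun n : ℕ => 2 * n - 1) Filter.atTop Filter.atTop :=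
  Filter.tendsto_atTop_mono' Filter.atTop
    (Filter.eventually_atTop.2 ⟨1, fun n hn => by simp only [id]; omega⟩) Filter.tendsto_id

lemma tendsto_aux2 : Filter.Tendsto (fun n : ℕ => 2 * n) Filter.atTop Filter.atTop :=
  Filter.tendsto_atTop_mono' Filter.atTop
    (Filter.eventually_atTop.2 ⟨0, fun n hn => by simp only [id]; omega⟩) Filter.tendsto_id

/-- with the Taylor-substitution setup, `F < 0` on `(0,T]` iff for some
`n ≥ n* = max(n₁,…,n_t)`, the upper limit polynomial `Tmax(n,F)` is negative on `(0,T]`. -/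
theorem stmt_16 (T : ℝ) (hT : 0 < T) (t : ℕ)
    (f fplus fminus : MvPolynomial (Option (Fin t)) ℝ)
    (hplus : ∀ mo : Option (Fin t) →₀ ℕ,
      MvPolynomial.coeff mo fplus =
        if 0 < MvPolynomial.coeff mo f then MvPolynomial.coeff mo f else 0)
    (hminus : ∀ mo : Option (Fin t) →₀ ℕ,
      MvPolynomial.coeff mo fminus =
        if MvPolynomial.coeff mo f < 0 then MvPolynomial.coeff mo f else 0)
    (trans : Fin t → ℝ → ℝ) (nth : Fin t → ℕ)
    (E : ∀ k, RegExpand (trans k) T (nth k))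
    (F : ℝ → ℝ)
    (hF : ∀ x : ℝ, F x =
      MvPolynomial.eval (fun o => Option.elim o x (fun k => trans k x)) f) :
    (∀ x ∈ Set.Ioc (0 : ℝ) T, F x < 0) ↔
      ∃ n, Finset.univ.sup nth ≤ n ∧
        ∀ x ∈ Set.Ioc (0 : ℝ) T,
          (Tmax fplus fminus (fun k => (E k).a) (fun k => (E k).m) n).eval x < 0 := by
  classical
  have hp_nonneg : ∀ d, 0 ≤ MvPolynomial.coeff d fplus := by
    intro d; rw [hplus d]; split_ifs with h
    · exact le_of_lt h
    · exact le_refl 0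
  have hm_nonpos : ∀ d, MvPolynomial.coeff d fminus ≤ 0 := by
    intro d; rw [hminus d]; split_ifs with h
    · exact le_of_lt h
    · exact le_refl 0
  have f_eq : fplus + fminus = f := by
    apply MvPolynomial.ext
    intro d
    rw [MvPolynomial.coeff_add, hplus d, hminus d]
    rcases lt_trichotomy (MvPolynomial.coeff d f) 0 with h | h | h
    · rw [if_neg (by linarith), if_pos h]; ring
    · rw [if_neg (by linarith), if_neg (by linarith), h]; ring
    · rw [if_pos h, if_neg (by linarith)]; ring
  set A : Fin t → ℕ → ℝ := fun k => (E k).a with hA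
  set M : Fin t → ℕ → ℕ := fun k => (E k).m with hM
  have hTmaxeval : ∀ (n : ℕ) (x : ℝ), (Tmax fplus fminus A M n).eval x =
      MvPolynomial.eval
        (fun o => Option.elim o x fun k => (taylorPoly (A k) (M k) (2*n-1)).eval x) fplus +
      MvPolynomial.eval
        (fun o => Option.elim o x fun k => (taylorPoly (A k) (M k) (2*n)).eval x) fminus := by
    intro n x
    rw [Tmax, Polynomial.eval_add, evalAeval, evalAeval]
    congr 1
    · refine congrArg (fun env => MvPolynomial.eval env fplus) ?_
      funext o; cases o <;> simp
    · refine congrArg (fun env => MvPolynomial.eval env fminus) ?_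
      funext o; cases o <;> simp
  have hTmineval : ∀ (n : ℕ) (x : ℝ), (Tmin fplus fminus A M n).eval x =
      MvPolynomial.eval
        (fun o => Option.elim o x fun k => (taylorPoly (A k) (M k) (2*n)).eval x) fplus +
      MvPolynomial.eval
        (fun o => Option.elim o x fun k => (taylorPoly (A k) (M k) (2*n-1)).eval x) fminus := by
    intro n x
    rw [Tmin, Polynomial.eval_add, evalAeval, evalAeval]
    congr 1
    · refine congrArg (fun env => MvPolynomial.eval env fplus) ?_
      funext o; cases o <;> simp
    · refine congrArg (fun env => MvPolynomial.eval env fminus) ?_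
      funext o; cases o <;> simp
  rcases Nat.eq_zero_or_pos t with ht | ht
  · -- degenerate case t = 0
    subst ht
    have key : ∀ (n : ℕ) (x : ℝ),
        (Tmax fplus fminus A M n).eval x = F x := by
      intro n x
      rw [hTmaxeval, hF x, ← f_eq, map_add]
      have e1 : ∀ N : ℕ,
          (fun o => Option.elim o x fun k : Fin 0 => (taylorPoly (A k) (M k) N).eval x)
          = (fun o => Option.elim o x fun k : Fin 0 => trans k x) := by
        intro N; funext o
        cases o with
        | none => rfl
        | some k => exact k.elim0
      rw [e1, e1]
    constructor
    · intro h
      refine ⟨0, by simp, fun x hx => ?_⟩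
      rw [key]; exact h x hx
    · rintro ⟨n, -, hn⟩ x hx
      rw [← key n x]; exact hn x hx
  · -- main case t > 0
    have hk1 : ∀ k : Fin t, 1 ≤ nth k := fun k => (E k).one_le hT
    set n₁ := Finset.univ.sup nth with hn₁def
    have hn₁k : ∀ k, nth k ≤ n₁ := fun k => Finset.le_sup (Finset.mem_univ k)
    have hsup1 : 1 ≤ n₁ := le_trans (hk1 ⟨0, ht⟩) (hn₁k ⟨0, ht⟩)
    have hSpos : ∀ (k : Fin t) (N : ℕ), nth k ≤ N → ∀ x ∈ Set.Ioc (0:ℝ) T,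
        0 < (taylorPoly (A k) (M k) N).eval x := fun k N hN x hx => (E k).taylor_pos N hN x hx
    have htrans_pos : ∀ (k : Fin t), ∀ x ∈ Set.Ioc (0:ℝ) T, 0 < trans k x :=
      fun k x hx => (E k).g_pos x hx
    have hS_le_g : ∀ (k : Fin t) (n : ℕ), n₁ ≤ n → ∀ x ∈ Set.Ioc (0:ℝ) T,
        (taylorPoly (A k) (M k) (2*n)).eval x ≤ trans k x := by
      intro k n hn x hx
      exact (E k).even_le_g hx (by have := hn₁k k; omega) ⟨n, by omega⟩
    have hg_le_S : ∀ (k : Fin t) (n : ℕ), n₁ ≤ n → ∀ x ∈ Set.Ioc (0:ℝ) T,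
        trans k x ≤ (taylorPoly (A k) (M k) (2*n-1)).eval x := by
      intro k n hn x hx
      exact (E k).g_le_odd hx (by have := hn₁k k; have := hsup1; omega) ⟨n-1, by omega⟩
    have hS_odd_anti : ∀ (k : Fin t) (n n' : ℕ), n₁ ≤ n → n ≤ n' → ∀ x ∈ Set.Ioc (0:ℝ) T,
        (taylorPoly (A k) (M k) (2*n'-1)).eval x ≤ (taylorPoly (A k) (M k) (2*n-1)).eval x := by
      intro k n n' hn hnn' x hx
      have h := odd_ge (A k) (M k) x (nth k) (fun q hq => (E k).terms_dec q hq x hx)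
        (2*n'-1 - (2*n-1)) (2*n-1) (by have := hn₁k k; have := hsup1; omega) ⟨n-1, by have := hsup1; omega⟩
      rwa [show 2*n-1 + (2*n'-1 - (2*n-1)) = 2*n'-1 from by have := hsup1; omega] at h
    have hS_even_mono : ∀ (k : Fin t) (n n' : ℕ), n₁ ≤ n → n ≤ n' → ∀ x ∈ Set.Ioc (0:ℝ) T,
        (taylorPoly (A k) (M k) (2*n)).eval x ≤ (taylorPoly (A k) (M k) (2*n')).eval x := by
      intro k n n' hn hnn' x hx
      have h := even_le (A k) (M k) x (nth k) (fun q hq => (E k).terms_dec q hq x hx)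
        (2*n' - 2*n) (2*n) (by have := hn₁k k; omega) ⟨n, by omega⟩
      rwa [show 2*n + (2*n' - 2*n) = 2*n' from by omega] at h
    have hF_le_Tmax : ∀ n, n₁ ≤ n → ∀ x ∈ Set.Ioc (0:ℝ) T,
        F x ≤ (Tmax fplus fminus A M n).eval x := by
      intro n hn x hx
      rw [hTmaxeval, hF x, ← f_eq, map_add]
      have h1 : MvPolynomial.eval (fun o => Option.elim o x fun k => trans k x) fplus ≤
          MvPolynomial.eval
            (fun o => Option.elim o x fun k => (taylorPoly (A k) (M k) (2*n-1)).eval x) fplus := by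
        apply evalMono fplus hp_nonneg
        · intro o; cases o with
          | none => exact hx.1.le
          | some k => exact (htrans_pos k x hx).le
        · intro o; cases o with
          | none => exact le_refl x
          | some k => exact hg_le_S k n hn x hx
      have h2 : MvPolynomial.eval (fun o => Option.elim o x fun k => trans k x) fminus ≤
          MvPolynomial.eval
            (fun o => Option.elim o x fun k => (taylorPoly (A k) (M k) (2*n)).eval x) fminus := by
        have h3 := evalMono (-fminus)
          (fun d => by rw [MvPolynomial.coeff_neg]; linarith [hm_nonpos d])
          (fun o => Option.elim o x fun k => (taylorPoly (A k) (M k) (2*n)).eval x)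
          (fun o => Option.elim o x fun k => trans k x)
          (fun o => by cases o with
            | none => exact hx.1.le
            | some k => exact (hSpos k (2*n) (by have := hn₁k k; omega) x hx).le)
          (fun o => by cases o with
            | none => exact le_refl x
            | some k => exact hS_le_g k n hn x hx)
        simp only [map_neg] at h3
        linarith
      linarith
    have hTmin_le_F : ∀ n, n₁ ≤ n → ∀ x ∈ Set.Ioc (0:ℝ) T,
        (Tmin fplus fminus A M n).eval x ≤ F x := by
      intro n hn x hx
      rw [hTmineval, hF x, ← f_eq, map_add]
      have h1 : MvPolynomial.eval
            (fun o => Option.elim o x fun k => (taylorPoly (A k) (M k) (2*n)).eval x) fplus ≤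
          MvPolynomial.eval (fun o => Option.elim o x fun k => trans k x) fplus := by
        apply evalMono fplus hp_nonneg
        · intro o; cases o with
          | none => exact hx.1.le
          | some k => exact (hSpos k (2*n) (by have := hn₁k k; omega) x hx).le
        · intro o; cases o with
          | none => exact le_refl x
          | some k => exact hS_le_g k n hn x hx
      have h2 : MvPolynomial.eval
            (fun o => Option.elim o x fun k => (taylorPoly (A k) (M k) (2*n-1)).eval x) fminus ≤
          MvPolynomial.eval (fun o => Option.elim o x fun k => trans k x) fminus := by
        have h3 := evalMono (-fminus)
          (fun d => by rw [MvPolynomial.coeff_neg]; linarith [hm_nonpos d])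
          (fun o => Option.elim o x fun k => trans k x)
          (fun o => Option.elim o x fun k => (taylorPoly (A k) (M k) (2*n-1)).eval x)
          (fun o => by cases o with
            | none => exact hx.1.le
            | some k => exact (htrans_pos k x hx).le)
          (fun o => by cases o with
            | none => exact le_refl x
            | some k => exact hg_le_S k n hn x hx)
        simp only [map_neg] at h3
        linarith
      linarith
    have hTmax_anti : ∀ n n', n₁ ≤ n → n ≤ n' → ∀ x ∈ Set.Ioc (0:ℝ) T,
        (Tmax fplus fminus A M n').eval x ≤ (Tmax fplus fminus A M n).eval x := by
      intro n n' hn hnn' x hx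
      rw [hTmaxeval, hTmaxeval]
      have h1 : MvPolynomial.eval
            (fun o => Option.elim o x fun k => (taylorPoly (A k) (M k) (2*n'-1)).eval x) fplus ≤
          MvPolynomial.eval
            (fun o => Option.elim o x fun k => (taylorPoly (A k) (M k) (2*n-1)).eval x) fplus := by
        apply evalMono fplus hp_nonneg
        · intro o; cases o with
          | none => exact hx.1.le
          | some k => exact (hSpos k (2*n'-1) (by have := hn₁k k; have := hsup1; omega) x hx).le
        · intro o; cases o with
          | none => exact le_refl x
          | some k => exact hS_odd_anti k n n' hn hnn' x hx
      have h2 : MvPolynomial.eval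
            (fun o => Option.elim o x fun k => (taylorPoly (A k) (M k) (2*n')).eval x) fminus ≤
          MvPolynomial.eval
            (fun o => Option.elim o x fun k => (taylorPoly (A k) (M k) (2*n)).eval x) fminus := by
        have h3 := evalMono (-fminus)
          (fun d => by rw [MvPolynomial.coeff_neg]; linarith [hm_nonpos d])
          (fun o => Option.elim o x fun k => (taylorPoly (A k) (M k) (2*n)).eval x)
          (fun o => Option.elim o x fun k => (taylorPoly (A k) (M k) (2*n')).eval x)
          (fun o => by cases o with
            | none => exact hx.1.le
            | some k => exact (hSpos k (2*n) (by have := hn₁k k; omega) x hx).le)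
          (fun o => by cases o with
            | none => exact le_refl x
            | some k => exact hS_even_mono k n n' hn hnn' x hx)
        simp only [map_neg] at h3
        linarith
      linarith
    have hTmax_tendsto : ∀ x ∈ Set.Ioc (0:ℝ) T,
        Filter.Tendsto (fun n => (Tmax fplus fminus A M n).eval x) Filter.atTop (nhds (F x)) := by
      intro x hx
      have hfn : (fun n => (Tmax fplus fminus A M n).eval x) = fun n =>
          MvPolynomial.eval
            (fun o => Option.elim o x fun k => (taylorPoly (A k) (M k) (2*n-1)).eval x) fplus +
          MvPolynomial.eval
            (fun o => Option.elim o x fun k => (taylorPoly (A k) (M k) (2*n)).eval x) fminus :=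
        funext fun n => hTmaxeval n x
      rw [hfn, hF x, ← f_eq, map_add]
      have henv1 : Filter.Tendsto
          (fun n (o : Option (Fin t)) =>
            Option.elim o x fun k => (taylorPoly (A k) (M k) (2*n-1)).eval x)
          Filter.atTop (nhds (fun o => Option.elim o x fun k => trans k x)) := by
        rw [tendsto_pi_nhds]
        intro o
        cases o with
        | none => exact tendsto_const_nhds
        | some k => exact ((E k).converges x ⟨hx.1.le, hx.2⟩).comp tendsto_aux1
      have henv2 : Filter.Tendsto
          (fun n (o : Option (Fin t)) =>
            Option.elim o x fun k => (taylorPoly (A k) (M k) (2*n)).eval x)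
          Filter.atTop (nhds (fun o => Option.elim o x fun k => trans k x)) := by
        rw [tendsto_pi_nhds]
        intro o
        cases o with
        | none => exact tendsto_const_nhds
        | some k => exact ((E k).converges x ⟨hx.1.le, hx.2⟩).comp tendsto_aux2
      have hc1 := ((MvPolynomial.continuous_eval fplus).tendsto _).comp henv1
      have hc2 := ((MvPolynomial.continuous_eval fminus).tendsto _).comp henv2
      exact Filter.Tendsto.add hc1 hc2
    have hdvdT2 : ∀ (k : Fin t) (r N N' : ℕ), r ≤ N → r ≤ N' →
        (Polynomial.X : Polynomial ℝ)^r ∣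
          (taylorPoly (A k) (M k) N' - taylorPoly (A k) (M k) N) := by
      intro k r N N' h1 h2
      rcases le_total N N' with h | h
      · refine dvd_trans (pow_dvd_pow _ ?_)
          (taylor_sub_dvd (A k) (M k) (m_mono_le (M k) (E k).m_mono) h)
        have := m_growth (M k) (E k).m_mono (N+1) (by omega)
        omega
      · have heq : taylorPoly (A k) (M k) N' - taylorPoly (A k) (M k) N =
            -(taylorPoly (A k) (M k) N - taylorPoly (A k) (M k) N') := by ring
        rw [heq, dvd_neg]
        refine dvd_trans (pow_dvd_pow _ ?_)
          (taylor_sub_dvd (A k) (M k) (m_mono_le (M k) (E k).m_mono) h)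
        have := m_growth (M k) (E k).m_mono (N'+1) (by omega)
        omega
    have hdvd : ∀ n n', n₁ ≤ n → n ≤ n' →
        (Polynomial.X : Polynomial ℝ)^(2*n-1) ∣
          ((Tmax fplus fminus A M n') - (Tmin fplus fminus A M n)) := by
      intro n n' hn hnn'
      rw [Tmax, Tmin]
      have heq : ∀ (P1 P2 Q1 Q2 : Polynomial ℝ),
          P1 + P2 - (Q1 + Q2) = (P1 - Q1) + (P2 - Q2) := fun _ _ _ _ => by ring
      rw [heq]
      apply dvd_add
      · apply aeval_sub_dvd
        intro o
        cases o with
        | none => simp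
        | some k => exact hdvdT2 k (2*n-1) (2*n) (2*n'-1) (by omega) (by have := hsup1; omega)
      · apply aeval_sub_dvd
        intro o
        cases o with
        | none => simp
        | some k => exact hdvdT2 k (2*n-1) (2*n-1) (2*n') (le_refl _) (by omega)
    constructor
    · -- forward direction
      intro hFneg
      by_cases hcase : ∃ n, n₁ ≤ n ∧ (Tmin fplus fminus A M n) ≠ 0 ∧
          (Tmin fplus fminus A M n).natTrailingDegree < 2*n-1
      · obtain ⟨n, hn, hne, hrlt⟩ := hcase
        set P := Tmin fplus fminus A M n with hP
        set r := P.natTrailingDegree with hr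
        have hPdvd : (Polynomial.X : Polynomial ℝ)^r ∣ P :=
          Polynomial.X_pow_dvd_iff.2
            (fun d hd => Polynomial.coeff_eq_zero_of_lt_natTrailingDegree hd)
        have hcne : P.coeff r ≠ 0 := by
          intro h
          exact hne (Polynomial.trailingCoeff_eq_zero.1 h)
        have hcneg : P.coeff r < 0 := by
          rcases lt_or_gt_of_ne hcne with h | h
          · exact h
          · exfalso
            obtain ⟨δ, hδ, hsig⟩ := sign_near_zero hPdvd
            set y := min (δ/2) T with hy
            have hy1 : 0 < y := lt_min (by linarith) hT
            have hy2 : y < δ := lt_of_le_of_lt (min_le_left _ _) (by linarith)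
            have hyT : y ≤ T := min_le_right _ _
            have hPy := (hsig y hy1 hy2).2 h
            have hle := hTmin_le_F n hn y ⟨hy1, hyT⟩
            have hlt := hFneg y ⟨hy1, hyT⟩
            rw [← hP] at hle
            linarith
        have hTmaxc : ∀ n', n ≤ n' → ∀ d, d < 2*n-1 →
            (Tmax fplus fminus A M n').coeff d = P.coeff d := by
          intro n' hnn' d hd
          have h0 := Polynomial.X_pow_dvd_iff.1 (hdvd n n' hn hnn') d hd
          rw [Polynomial.coeff_sub] at h0
          rw [← hP] at h0
          linarith
        have hTmaxdvd : (Polynomial.X : Polynomial ℝ)^r ∣ Tmax fplus fminus A M n :=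
          Polynomial.X_pow_dvd_iff.2 (fun d hd => by
            rw [hTmaxc n (le_refl n) d (by omega)]
            exact Polynomial.coeff_eq_zero_of_lt_natTrailingDegree hd)
        obtain ⟨δ, hδpos, hsig⟩ := sign_near_zero hTmaxdvd
        have hTmaxneg : ∀ y : ℝ, 0 < y → y < δ → (Tmax fplus fminus A M n).eval y < 0 :=
          fun y h1 h2 => (hsig y h1 h2).1 (by rw [hTmaxc n (le_refl n) r hrlt]; exact hcneg)
        set δ' := min δ T with hδ'
        have hδ'pos : 0 < δ' := lt_min hδpos hT
        set U : ℕ → Set ℝ := fun j => {y | (Tmax fplus fminus A M (j + n₁)).eval y < 0} with hU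
        have hUopen : ∀ j, IsOpen (U j) :=
          fun j => isOpen_lt (Polynomial.continuous _) continuous_const
        have hcover : Set.Icc δ' T ⊆ ⋃ j, U j := by
          intro y hy
          have hyIoc : y ∈ Set.Ioc (0:ℝ) T := ⟨lt_of_lt_of_le hδ'pos hy.1, hy.2⟩
          have hlim := hTmax_tendsto y hyIoc
          have hev : ∀ᶠ N in Filter.atTop, (Tmax fplus fminus A M N).eval y < 0 :=
            hlim.eventually (isOpen_Iio.eventually_mem (hFneg y hyIoc))
          obtain ⟨N, hNlt, hNge⟩ := (hev.and (Filter.eventually_ge_atTop n₁)).exists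
          refine Set.mem_iUnion.2 ⟨N - n₁, ?_⟩
          show (Tmax fplus fminus A M (N - n₁ + n₁)).eval y < 0
          rwa [Nat.sub_add_cancel hNge]
        obtain ⟨s, hs⟩ := isCompact_Icc.elim_finite_subcover U hUopen hcover
        refine ⟨max n (s.sup id + n₁), le_trans hn (le_max_left _ _), ?_⟩
        intro x hx
        rcases lt_or_ge x δ' with hxδ | hxδ
        · have h1 := hTmaxneg x hx.1 (lt_of_lt_of_le hxδ (min_le_left _ _))
          have h2 := hTmax_anti n (max n (s.sup id + n₁)) hn (le_max_left _ _) x hx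
          linarith
        · have hxK : x ∈ Set.Icc δ' T := ⟨hxδ, hx.2⟩
          obtain ⟨j, hjs, hjU⟩ := Set.mem_iUnion₂.1 (hs hxK)
          have hj : j ≤ s.sup id := Finset.le_sup (f := id) hjs
          have h2 := hTmax_anti (j + n₁) (max n (s.sup id + n₁)) (by omega)
            (le_trans (by omega) (le_max_right _ _)) x hx
          have h1 : (Tmax fplus fminus A M (j + n₁)).eval x < 0 := hjU
          linarith
      · -- degenerate case: all truncations vanish
        exfalso
        push_neg at hcase
        set x₀ := min T (1/2 : ℝ) with hx₀
        have hx₀pos : 0 < x₀ := lt_min hT (by norm_num)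
        have hx₀T : x₀ ≤ T := min_le_left _ _
        have hx₀half : x₀ ≤ 1/2 := min_le_right _ _
        have hx₀Ioc : x₀ ∈ Set.Ioc (0:ℝ) T := ⟨hx₀pos, hx₀T⟩
        set Cp := ∑ d ∈ fplus.support, |MvPolynomial.coeff d fplus| with hCp
        set Cm := ∑ d ∈ fminus.support, |MvPolynomial.coeff d fminus| with hCm
        set Bd := max fplus.totalDegree fminus.totalDegree with hBd
        have hCp0 : 0 ≤ Cp := Finset.sum_nonneg fun d _ => abs_nonneg _
        have hCm0 : 0 ≤ Cm := Finset.sum_nonneg fun d _ => abs_nonneg _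
        have hbound : ∀ n, n₁ ≤ n →
            -((Cp + Cm) * ((2*n : ℕ) : ℝ)^Bd * x₀^(2*n-1)) ≤ F x₀ := by
          intro n hn
          have h2n1 : (1:ℝ) ≤ ((2*n : ℕ) : ℝ) := by
            have : 1 ≤ 2*n := by omega
            exact_mod_cast this
          have hvan : ∀ i, i < 2*n-1 → (Tmin fplus fminus A M n).coeff i = 0 := by
            intro i hi
            by_cases h0 : Tmin fplus fminus A M n = 0
            · rw [h0]; simp
            · exact Polynomial.coeff_eq_zero_of_lt_natTrailingDegree
                (lt_of_lt_of_le hi (hcase n hn h0))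
          have hdom : Dom (Tmin fplus fminus A M n)
              ((∑ d ∈ fplus.support, Polynomial.C |MvPolynomial.coeff d fplus| *
                  ∏ i ∈ d.support,
                    ((fun o => Option.elim o Polynomial.X
                        fun k => taylorDom (M k) (2*n)) i)^(d i)) +
               (∑ d ∈ fminus.support, Polynomial.C |MvPolynomial.coeff d fminus| *
                  ∏ i ∈ d.support,
                    ((fun o => Option.elim o Polynomial.X
                        fun k => taylorDom (M k) (2*n-1)) i)^(d i))) := by
            rw [Tmin]
            apply Dom.add
            · apply dom_aeval
              intro o; cases o with
              | none => exact Dom.X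
              | some k => exact dom_taylor (A k) (M k) (2*n) (E k).a_pos (E k).a_le_one
            · apply dom_aeval
              intro o; cases o with
              | none => exact Dom.X
              | some k => exact dom_taylor (A k) (M k) (2*n-1) (E k).a_pos (E k).a_le_one
          have hD1 : (∑ d ∈ fplus.support, Polynomial.C |MvPolynomial.coeff d fplus| *
                ∏ i ∈ d.support,
                  ((fun o => Option.elim o Polynomial.X
                      fun k => taylorDom (M k) (2*n)) i)^(d i)).eval 1 ≤
              Cp * ((2*n : ℕ) : ℝ)^fplus.totalDegree := by
            apply dominator_eval_one_le fplus _ _ h2n1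
            · intro o; cases o with
              | none => simp
              | some k => exact taylorDom_eval_one_nonneg _ _
            · intro o; cases o with
              | none => simpa using h2n1
              | some k =>
                  show (taylorDom (M k) (2*n)).eval 1 ≤ ((2*n : ℕ) : ℝ)
                  rw [taylorDom_eval_one]
          have hD2 : (∑ d ∈ fminus.support, Polynomial.C |MvPolynomial.coeff d fminus| *
                ∏ i ∈ d.support,
                  ((fun o => Option.elim o Polynomial.X
                      fun k => taylorDom (M k) (2*n-1)) i)^(d i)).eval 1 ≤
              Cm * ((2*n : ℕ) : ℝ)^fminus.totalDegree := by
            apply dominator_eval_one_le fminus _ _ h2n1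
            · intro o; cases o with
              | none => simp
              | some k => exact taylorDom_eval_one_nonneg _ _
            · intro o; cases o with
              | none => simpa using h2n1
              | some k =>
                  show (taylorDom (M k) (2*n-1)).eval 1 ≤ ((2*n : ℕ) : ℝ)
                  rw [taylorDom_eval_one]
                  exact_mod_cast Nat.sub_le (2*n) 1
          have hEv := hdom.eval_le (2*n-1) hvan hx₀pos.le (le_trans hx₀half (by norm_num))
          have hpow1 : ((2*n : ℕ) : ℝ)^fplus.totalDegree ≤ ((2*n : ℕ) : ℝ)^Bd :=
            pow_le_pow_right₀ h2n1 (le_max_left _ _)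
          have hpow2 : ((2*n : ℕ) : ℝ)^fminus.totalDegree ≤ ((2*n : ℕ) : ℝ)^Bd :=
            pow_le_pow_right₀ h2n1 (le_max_right _ _)
          have hsum : ((∑ d ∈ fplus.support, Polynomial.C |MvPolynomial.coeff d fplus| *
                ∏ i ∈ d.support,
                  ((fun o => Option.elim o Polynomial.X
                      fun k => taylorDom (M k) (2*n)) i)^(d i)) +
               (∑ d ∈ fminus.support, Polynomial.C |MvPolynomial.coeff d fminus| *
                ∏ i ∈ d.support,
                  ((fun o => Option.elim o Polynomial.X
                      fun k => taylorDom (M k) (2*n-1)) i)^(d i))).eval 1 ≤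
              (Cp + Cm) * ((2*n : ℕ) : ℝ)^Bd := by
            rw [Polynomial.eval_add]
            have e1 : Cp * ((2*n : ℕ) : ℝ)^fplus.totalDegree ≤ Cp * ((2*n : ℕ) : ℝ)^Bd :=
              mul_le_mul_of_nonneg_left hpow1 hCp0
            have e2 : Cm * ((2*n : ℕ) : ℝ)^fminus.totalDegree ≤ Cm * ((2*n : ℕ) : ℝ)^Bd :=
              mul_le_mul_of_nonneg_left hpow2 hCm0
            nlinarith [hD1, hD2]
          have habs : |(Tmin fplus fminus A M n).eval x₀| ≤
              (Cp + Cm) * ((2*n : ℕ) : ℝ)^Bd * x₀^(2*n-1) :=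
            le_trans hEv (mul_le_mul_of_nonneg_right hsum (pow_nonneg hx₀pos.le _))
          have hlow := neg_abs_le ((Tmin fplus fminus A M n).eval x₀)
          have hle := hTmin_le_F n hn x₀ hx₀Ioc
          linarith
        have hsq : x₀^2 < 1 := by nlinarith
        have hbase := tendsto_pow_const_mul_const_pow_of_lt_one Bd
          (by positivity : (0:ℝ) ≤ x₀^2) hsq
        have hconst := hbase.const_mul ((Cp + Cm) * 2^Bd / x₀)
        have heq : (fun n : ℕ => ((Cp + Cm) * 2^Bd / x₀) * ((n:ℝ)^Bd * (x₀^2)^n)) =ᶠ[Filter.atTop]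
            (fun n : ℕ => (Cp + Cm) * ((2*n : ℕ) : ℝ)^Bd * x₀^(2*n-1)) := by
          filter_upwards [Filter.eventually_ge_atTop 1] with n hn1
          have hxp : x₀^(2*n-1) * x₀ = (x₀^2)^n := by
            rw [← pow_succ, ← pow_mul]
            congr 1
            omega
          have hcast : ((2*n : ℕ) : ℝ) = 2 * (n:ℝ) := by push_cast; ring
          rw [hcast, mul_pow, ← hxp]
          field_simp
        have htend0 : Filter.Tendsto
            (fun n : ℕ => (Cp + Cm) * ((2*n : ℕ) : ℝ)^Bd * x₀^(2*n-1))
            Filter.atTop (nhds 0) := by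
          refine Filter.Tendsto.congr' heq ?_
          simpa using hconst
        have hge : (0:ℝ) ≤ F x₀ := by
          have hev : ∀ᶠ n : ℕ in Filter.atTop,
              -((Cp + Cm) * ((2*n : ℕ) : ℝ)^Bd * x₀^(2*n-1)) ≤ F x₀ := by
            filter_upwards [Filter.eventually_ge_atTop n₁] with n hn
            exact hbound n hn
          have h := le_of_tendsto htend0.neg hev
          simpa using h
        exact absurd (hFneg x₀ hx₀Ioc) (not_lt.2 hge)
    · -- backward direction
      rintro ⟨n, hnsup, hneg⟩ x hx
      exact lt_of_le_of_lt (hF_le_Tmax n hnsup x hx) (hneg x hx)
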